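/- Let Θ_m ⊆ ℝ^d be a nonempty finite set and let A* be the Bayesian mixture algorithm with the uniform prior on Θ_m. Let θ* ∈ ℝ^d and η ≥ 0 be such that there exists a probability distribution Q supported on Θ_m with mean θ* (Σ_{θ∈Θ_m} Q(θ)·θ_i = θ*_i for each i), uncorrelated coordinates (Σ_θ Q(θ)(θ_i − θ*_i)(θ_j − θ*_j) = 0 for i ≠ j), and coordinate variances at most η² (Σ_θ Q(θ)(θ_i − θ*_i)² ≤ η² for each i). Then for every horizon T and every sequence S_T with ‖x_t‖_∞ ≤ 1 for all t, Regret(A*,S_T,θ*) ≤ log|Θ_m| + dTη²/8. -/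

import Mathlib

open MeasureTheory Real Filter

noncomputable section

/-- Dot product on `Fin d → ℝ`. -/
def dotp {d : ℕ} (x θ : Fin d → ℝ) : ℝ := ∑ i, x i * θ i

/-- Logistic model probability of label `y ∈ {−1,1}`: `p(y|x,θ) = 1/(1+exp(−y⟨x,θ⟩))`. -/
def lprob {d : ℕ} (θ x : Fin d → ℝ) (y : ℝ) : ℝ :=
  1 / (1 + Real.exp (-(y * dotp x θ)))

/-- Logistic loss `ℓ(θ,x,y) = log(1+exp(−y⟨x,θ⟩))`. -/
def lloss {d : ℕ} (θ x : Fin d → ℝ) (y : ℝ) : ℝ :=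
  Real.log (1 + Real.exp (-(y * dotp x θ)))

/-- Cumulative loss `L(θ,S_T)` of the parameter `θ` on the sequence `S`. -/
def seqLoss {d T : ℕ} (θ : Fin d → ℝ) (S : Fin T → (Fin d → ℝ) × ℝ) : ℝ :=
  ∑ t, lloss θ (S t).1 (S t).2

/-- An online algorithm: maps a history, a current feature vector and a label to a probability. -/
abbrev Alg (d : ℕ) := List ((Fin d → ℝ) × ℝ) → (Fin d → ℝ) → ℝ → ℝ

/-- Validity of an online algorithm: it assigns a probability distribution to the labels `{−1,1}`. -/
def ValidAlg {d : ℕ} (A : Alg d) : Prop :=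
  ∀ h x, 0 ≤ A h x 1 ∧ 0 ≤ A h x (-1) ∧ A h x 1 + A h x (-1) = 1

/-- Validity of a sequence: features have `‖x_t‖_∞ ≤ 1` and labels lie in `{−1,1}`. -/
def ValidSeq {d T : ℕ} (S : Fin T → (Fin d → ℝ) × ℝ) : Prop :=
  ∀ t, (∀ i, |(S t).1 i| ≤ 1) ∧ ((S t).2 = 1 ∨ (S t).2 = -1)

/-- Cumulative loss `L(A,S_T) = −∑_t log A(S_{t−1}, x_t, y_t)` of an online algorithm. -/
def algLoss {d T : ℕ} (A : Alg d) (S : Fin T → (Fin d → ℝ) × ℝ) : ℝ :=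
  -∑ t, Real.log (A ((List.ofFn S).take t.val) (S t).1 (S t).2)

/-- Regret of an online algorithm against a comparator `θ`. -/
def regret {d T : ℕ} (A : Alg d) (S : Fin T → (Fin d → ℝ) × ℝ) (θ : Fin d → ℝ) : ℝ :=
  algLoss A S - seqLoss θ S

/-- `∏_{(x,y) ∈ h} p(y|x,θ)` over a history `h`. -/
def histProb {d : ℕ} (θ : Fin d → ℝ) (h : List ((Fin d → ℝ) × ℝ)) : ℝ :=
  (h.map (fun s => lprob θ s.1 s.2)).prod

/-- Mixture probability `p(y^t|x^t) = ∫ ∏_τ p(y_τ|x_τ,θ) dp₀(θ)`. -/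
def mixProb {d : ℕ} (p₀ : Measure (Fin d → ℝ)) (h : List ((Fin d → ℝ) × ℝ)) : ℝ :=
  ∫ θ, histProb θ h ∂p₀

/-- The Bayesian mixture algorithm with prior `p₀`. -/
def bayesAlg {d : ℕ} (p₀ : Measure (Fin d → ℝ)) : Alg d :=
  fun h x y => mixProb p₀ (h ++ [(x, y)]) / mixProb p₀ h

/-- Discrete mixture probability for a prior given by a probability mass function `p₀`. -/
def mixProbD {d : ℕ} (p₀ : (Fin d → ℝ) → ℝ) (h : List ((Fin d → ℝ) × ℝ)) : ℝ :=
  ∑' θ, p₀ θ * histProb θ h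

/-- The Bayesian mixture algorithm with a discrete prior `p₀`. -/
def bayesAlgD {d : ℕ} (p₀ : (Fin d → ℝ) → ℝ) : Alg d :=
  fun h x y => mixProbD p₀ (h ++ [(x, y)]) / mixProbD p₀ h

/-- Kullback–Leibler divergence `D(Q‖p₀) = ∫ log (dQ/dp₀) dQ`. -/
def KL {d : ℕ} (Q p₀ : Measure (Fin d → ℝ)) : ℝ :=
  ∫ θ, Real.log (Q.rnDeriv p₀ θ).toReal ∂Q

/-- The label in `{−1,1}` encoded by a Boolean. -/
def signv : Bool → ℝ := fun b => if b then 1 else -1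

/-- Binary entropy function (with `h₂(0) = h₂(1) = 0`, since `Real.log 0 = 0`). -/
def binEnt (p : ℝ) : ℝ := -(p * Real.log p) - (1 - p) * Real.log (1 - p)

end

/-! The softplus `u ↦ log (1 + exp u)` has second derivative `σ (1 - σ) ≤ 1/4`, so it lies below
its tangent at `v` plus `(u - v)² / 8`. Averaging this over `θ ∼ Q` at `v = -y⟨x, θ*⟩`, the linear
term vanishes because `Q` has mean `θ*`, and the quadratic term is `∑ᵢ xᵢ² Var_Q(θᵢ) ≤ d η²` because
the coordinates are uncorrelated; so `E_Q L(θ, S_T) ≤ L(θ*, S_T) + d T η² / 8`. The loss of the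
mixture telescopes to `-log (|Θ_m|⁻¹ ∑_θ exp (-L(θ, S_T)))`, and Jensen's inequality for `exp`
bounds `-log ∑_θ exp (-L(θ, S_T))` by `E_Q L(θ, S_T)`. -/

open Finset

section Softplus

open Set

lemma hasDerivAt_log_one_add_exp (t : ℝ) :
    HasDerivAt (fun u => log (1 + exp u)) (sigmoid t) t := by
  convert ((hasDerivAt_exp t).const_add 1).log (by positivity) using 1
  rw [sigmoid_def, exp_neg]
  field_simp
  ring

lemma sigmoid_mul_one_sub_sigmoid_le (t : ℝ) : sigmoid t * (1 - sigmoid t) ≤ 1 / 4 := by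
  nlinarith [sq_nonneg (sigmoid t - 1 / 2)]

lemma hasDerivAt_log_one_add_exp_sub_sq (t : ℝ) :
    HasDerivAt (fun u => log (1 + exp u) - u ^ 2 / 8) (sigmoid t - t / 4) t := by
  have hsq : HasDerivAt (fun u : ℝ => u ^ 2 / 8) (t / 4) t :=
    ((hasDerivAt_pow 2 t).div_const 8).congr_deriv (by ring)
  exact (hasDerivAt_log_one_add_exp t).sub hsq

lemma concaveOn_log_one_add_exp_sub_sq :
    ConcaveOn ℝ univ (fun u => log (1 + exp u) - u ^ 2 / 8) := by
  have hf := hasDerivAt_log_one_add_exp_sub_sq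
  have hf' : ∀ t, HasDerivAt (fun u => sigmoid u - u / 4)
      (sigmoid t * (1 - sigmoid t) - 1 / 4) t :=
    fun t => (hasDerivAt_sigmoid t).sub ((hasDerivAt_id t).div_const 4)
  refine concaveOn_of_hasDerivWithinAt2_nonpos convex_univ
    (fun t _ => (hf t).continuousAt.continuousWithinAt) (fun t _ => (hf t).hasDerivWithinAt)
    (fun t _ => (hf' t).hasDerivWithinAt) fun t _ => ?_
  linarith [sigmoid_mul_one_sub_sigmoid_le t]

lemma ConcaveOn.le_add_mul_sub_of_hasDerivAt {S : Set ℝ} {f : ℝ → ℝ} {f' x y : ℝ}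
    (hf : ConcaveOn ℝ S f) (hxS : x ∈ S) (hyS : y ∈ S) (hx : HasDerivAt f f' x) :
    f y ≤ f x + f' * (y - x) := by
  rcases lt_trichotomy x y with hxy | rfl | hyx
  · have := hf.slope_le_of_hasDerivAt hxS hyS hxy hx
    rw [slope_def_field, div_le_iff₀ (sub_pos.2 hxy)] at this
    linarith
  · simp
  · have := hf.le_slope_of_hasDerivAt hyS hxS hyx hx
    rw [slope_def_field, le_div_iff₀ (sub_pos.2 hyx)] at this
    linarith

lemma log_one_add_exp_le (v u : ℝ) :
    log (1 + exp u) ≤ log (1 + exp v) + sigmoid v * (u - v) + (u - v) ^ 2 / 8 := by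
  have := concaveOn_log_one_add_exp_sub_sq.le_add_mul_sub_of_hasDerivAt
    (mem_univ v) (mem_univ u) (hasDerivAt_log_one_add_exp_sub_sq v)
  linarith

end Softplus

lemma neg_log_sum_exp_neg_le {α : Type*} (s : Finset α) (Q L : α → ℝ) (hQ0 : ∀ a ∈ s, 0 ≤ Q a)
    (hQ1 : ∑ a ∈ s, Q a = 1) : -log (∑ a ∈ s, exp (-L a)) ≤ ∑ a ∈ s, Q a * L a := by
  have hQle : ∀ a ∈ s, Q a ≤ 1 := fun a ha => hQ1 ▸ single_le_sum hQ0 ha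
  have hjensen : exp (∑ a ∈ s, Q a * -L a) ≤ ∑ a ∈ s, Q a * exp (-L a) := by
    simpa using convexOn_exp.map_sum_le hQ0 hQ1 fun a _ => Set.mem_univ (-L a)
  have hpos : 0 < ∑ a ∈ s, exp (-L a) :=
    sum_pos (fun a _ => exp_pos _) (nonempty_of_sum_ne_zero (hQ1 ▸ one_ne_zero))
  have := (le_log_iff_exp_le hpos).2 (hjensen.trans (sum_le_sum fun a ha =>
    mul_le_of_le_one_left (exp_pos _).le (hQle a ha)))
  simp only [mul_neg, sum_neg_distrib] at this
  linarith

section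

variable {d : ℕ}

lemma dotp_sub (x θ θ' : Fin d → ℝ) : dotp x (θ - θ') = dotp x θ - dotp x θ' := by
  simp only [dotp, Pi.sub_apply, mul_sub, sum_sub_distrib]

lemma sum_mul_dotp_sub_eq_zero (s : Finset (Fin d → ℝ)) (Q : (Fin d → ℝ) → ℝ) (c x : Fin d → ℝ)
    (hQ1 : ∑ θ ∈ s, Q θ = 1) (hmean : ∀ i, ∑ θ ∈ s, Q θ * θ i = c i) :
    ∑ θ ∈ s, Q θ * dotp x (θ - c) = 0 := by
  have hcentered : ∀ i, ∑ θ ∈ s, Q θ * (θ i - c i) = 0 := fun i => by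
    simp only [mul_sub, sum_sub_distrib, ← sum_mul, hQ1, hmean, one_mul, sub_self]
  calc ∑ θ ∈ s, Q θ * dotp x (θ - c) = ∑ i, x i * ∑ θ ∈ s, Q θ * (θ i - c i) := by
        simp only [dotp, Pi.sub_apply, mul_sum]
        rw [sum_comm]
        exact sum_congr rfl fun _ _ => sum_congr rfl fun _ _ => by ring
    _ = 0 := by simp [hcentered]

lemma sum_mul_dotp_sub_sq_eq (s : Finset (Fin d → ℝ)) (Q : (Fin d → ℝ) → ℝ) (c x : Fin d → ℝ)
    (huncorr : ∀ i j, i ≠ j → ∑ θ ∈ s, Q θ * ((θ i - c i) * (θ j - c j)) = 0) :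
    ∑ θ ∈ s, Q θ * dotp x (θ - c) ^ 2 = ∑ i, x i ^ 2 * ∑ θ ∈ s, Q θ * (θ i - c i) ^ 2 := by
  calc ∑ θ ∈ s, Q θ * dotp x (θ - c) ^ 2
      = ∑ i, ∑ j, x i * x j * ∑ θ ∈ s, Q θ * ((θ i - c i) * (θ j - c j)) := by
        have hexpand : ∀ θ, Q θ * dotp x (θ - c) ^ 2
            = ∑ i, ∑ j, x i * x j * (Q θ * ((θ i - c i) * (θ j - c j))) := fun θ => by
          rw [dotp, sq, sum_mul_sum, mul_sum]
          refine sum_congr rfl fun _ _ => ?_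
          rw [mul_sum]
          exact sum_congr rfl fun _ _ => by simp only [Pi.sub_apply]; ring
        simp only [hexpand, mul_sum]
        rw [sum_comm]
        exact sum_congr rfl fun i _ => sum_comm
    _ = ∑ i, x i ^ 2 * ∑ θ ∈ s, Q θ * (θ i - c i) ^ 2 := by
        refine sum_congr rfl fun i _ => ?_
        rw [sum_eq_single i (fun j _ hji => by rw [huncorr i j hji.symm, mul_zero])
          (by simp)]
        simp only [sq]

lemma lloss_le_quadratic (θ c x : Fin d → ℝ) {y : ℝ} (hy : y ^ 2 = 1) :
    lloss θ x y ≤ lloss c x y - y * sigmoid (-(y * dotp x c)) * dotp x (θ - c)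
      + dotp x (θ - c) ^ 2 / 8 := by
  have := log_one_add_exp_le (-(y * dotp x c)) (-(y * dotp x θ))
  have hdiff : -(y * dotp x θ) - -(y * dotp x c) = -y * dotp x (θ - c) := by
    rw [dotp_sub]; ring
  rw [hdiff, mul_pow, neg_sq, hy, one_mul] at this
  unfold lloss
  linarith

lemma sum_mul_lloss_le (s : Finset (Fin d → ℝ)) (Q : (Fin d → ℝ) → ℝ) (c : Fin d → ℝ) (η : ℝ)
    (hQ0 : ∀ θ ∈ s, 0 ≤ Q θ) (hQ1 : ∑ θ ∈ s, Q θ = 1) (hmean : ∀ i, ∑ θ ∈ s, Q θ * θ i = c i)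
    (huncorr : ∀ i j, i ≠ j → ∑ θ ∈ s, Q θ * ((θ i - c i) * (θ j - c j)) = 0)
    (hvar : ∀ i, ∑ θ ∈ s, Q θ * (θ i - c i) ^ 2 ≤ η ^ 2)
    {x : Fin d → ℝ} (hx : ∀ i, |x i| ≤ 1) {y : ℝ} (hy : y = 1 ∨ y = -1) :
    ∑ θ ∈ s, Q θ * lloss θ x y ≤ lloss c x y + d * η ^ 2 / 8 := by
  have hy2 : y ^ 2 = 1 := by rcases hy with rfl | rfl <;> norm_num
  have hsecond : ∑ θ ∈ s, Q θ * dotp x (θ - c) ^ 2 ≤ d * η ^ 2 := by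
    rw [sum_mul_dotp_sub_sq_eq s Q c x huncorr]
    calc ∑ i, x i ^ 2 * ∑ θ ∈ s, Q θ * (θ i - c i) ^ 2 ≤ ∑ _i : Fin d, 1 * η ^ 2 := by
          refine sum_le_sum fun i _ => mul_le_mul ?_ (hvar i)
            (sum_nonneg fun θ hθ => mul_nonneg (hQ0 θ hθ) (sq_nonneg _)) zero_le_one
          rw [sq_le_one_iff_abs_le_one]
          exact hx i
      _ = d * η ^ 2 := by simp
  calc ∑ θ ∈ s, Q θ * lloss θ x y
      ≤ ∑ θ ∈ s, Q θ * (lloss c x y - y * sigmoid (-(y * dotp x c)) * dotp x (θ - c)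
          + dotp x (θ - c) ^ 2 / 8) :=
        sum_le_sum fun θ hθ => mul_le_mul_of_nonneg_left (lloss_le_quadratic θ c x hy2) (hQ0 θ hθ)
    _ = (∑ θ ∈ s, Q θ) * lloss c x y
          - y * sigmoid (-(y * dotp x c)) * ∑ θ ∈ s, Q θ * dotp x (θ - c)
          + (∑ θ ∈ s, Q θ * dotp x (θ - c) ^ 2) / 8 := by
        simp only [sum_mul, mul_sum, sum_div, ← sum_sub_distrib, ← sum_add_distrib]
        exact sum_congr rfl fun θ _ => by ring
    _ ≤ lloss c x y + d * η ^ 2 / 8 := by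
        rw [hQ1, sum_mul_dotp_sub_eq_zero s Q c x hQ1 hmean]
        linarith

lemma sum_mul_seqLoss_le {T : ℕ} (s : Finset (Fin d → ℝ)) (Q : (Fin d → ℝ) → ℝ)
    (c : Fin d → ℝ) (η : ℝ)
    (hQ0 : ∀ θ ∈ s, 0 ≤ Q θ) (hQ1 : ∑ θ ∈ s, Q θ = 1) (hmean : ∀ i, ∑ θ ∈ s, Q θ * θ i = c i)
    (huncorr : ∀ i j, i ≠ j → ∑ θ ∈ s, Q θ * ((θ i - c i) * (θ j - c j)) = 0)
    (hvar : ∀ i, ∑ θ ∈ s, Q θ * (θ i - c i) ^ 2 ≤ η ^ 2)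
    {S : Fin T → (Fin d → ℝ) × ℝ} (hS : ValidSeq S) :
    ∑ θ ∈ s, Q θ * seqLoss θ S ≤ seqLoss c S + T * (d * η ^ 2 / 8) := by
  calc ∑ θ ∈ s, Q θ * seqLoss θ S = ∑ t, ∑ θ ∈ s, Q θ * lloss θ (S t).1 (S t).2 := by
        simp only [seqLoss, mul_sum]
        exact sum_comm
    _ ≤ ∑ t, (lloss c (S t).1 (S t).2 + d * η ^ 2 / 8) := sum_le_sum fun t _ =>
        sum_mul_lloss_le s Q c η hQ0 hQ1 hmean huncorr hvar (hS t).1 (hS t).2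
    _ = seqLoss c S + T * (d * η ^ 2 / 8) := by simp [seqLoss, sum_add_distrib]

lemma lprob_eq_exp_neg_lloss (θ x : Fin d → ℝ) (y : ℝ) : lprob θ x y = exp (-lloss θ x y) := by
  rw [lprob, lloss, exp_neg (log _), exp_log (by positivity), one_div]

lemma histProb_pos (θ : Fin d → ℝ) (h : List ((Fin d → ℝ) × ℝ)) : 0 < histProb θ h :=
  List.prod_pos fun a ha => by
    obtain ⟨s, -, rfl⟩ := List.mem_map.1 ha
    exact one_div_pos.2 (by positivity)

lemma histProb_ofFn {T : ℕ} (θ : Fin d → ℝ) (S : Fin T → (Fin d → ℝ) × ℝ) :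
    histProb θ (List.ofFn S) = exp (-seqLoss θ S) := by
  simp only [histProb, List.map_ofFn, List.prod_ofFn, Function.comp_apply,
    lprob_eq_exp_neg_lloss, seqLoss, ← sum_neg_distrib, exp_sum]

lemma mixProbD_indicator_const (s : Finset (Fin d → ℝ)) (c : ℝ) (h : List ((Fin d → ℝ) × ℝ)) :
    mixProbD ((s : Set (Fin d → ℝ)).indicator fun _ => c) h = c * ∑ θ ∈ s, histProb θ h := by
  rw [mixProbD, tsum_eq_sum (s := s) fun θ hθ => by simp [hθ], mul_sum]
  exact sum_congr rfl fun θ hθ => by simp [hθ]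

lemma take_ofFn_succ {α : Type*} {T : ℕ} (S : Fin T → α) (t : Fin T) :
    (List.ofFn S).take t ++ [S t] = (List.ofFn S).take (t + 1) := by
  rw [List.take_add_one, List.getElem?_ofFn]
  simp [t.isLt]

lemma algLoss_bayesAlgD {T : ℕ} (p₀ : (Fin d → ℝ) → ℝ) (hp₀ : ∀ h, mixProbD p₀ h ≠ 0)
    (S : Fin T → (Fin d → ℝ) × ℝ) :
    algLoss (bayesAlgD p₀) S = log (mixProbD p₀ []) - log (mixProbD p₀ (List.ofFn S)) := by
  let ℓ : ℕ → ℝ := fun n => log (mixProbD p₀ ((List.ofFn S).take n))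
  have hstep : ∀ t : Fin T,
      log (bayesAlgD p₀ ((List.ofFn S).take t) (S t).1 (S t).2) = ℓ (t + 1) - ℓ t := fun t => by
    rw [bayesAlgD, log_div (hp₀ _) (hp₀ _), take_ofFn_succ]
  rw [algLoss, sum_congr rfl fun t _ => hstep t,
    Fin.sum_univ_eq_sum_range (fun n => ℓ (n + 1) - ℓ n), sum_range_sub]
  simp [ℓ, List.take_of_length_le (List.length_ofFn (f := S)).le]

lemma algLoss_bayesAlgD_uniform {T : ℕ} (s : Finset (Fin d → ℝ)) (hs : s.Nonempty)
    (S : Fin T → (Fin d → ℝ) × ℝ) :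
    algLoss (bayesAlgD ((s : Set (Fin d → ℝ)).indicator fun _ => ((s.card : ℝ))⁻¹)) S
      = log s.card - log (∑ θ ∈ s, exp (-seqLoss θ S)) := by
  have hcard : (0 : ℝ) < s.card := by exact_mod_cast hs.card_pos
  have hsum : ∀ h, 0 < ∑ θ ∈ s, histProb θ h := fun h => sum_pos (fun θ _ => histProb_pos θ h) hs
  rw [algLoss_bayesAlgD _ fun h => by
    rw [mixProbD_indicator_const]; exact (mul_pos (inv_pos.2 hcard) (hsum h)).ne']
  have hnil : ∑ θ ∈ s, histProb θ [] = s.card := by simp [histProb]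
  rw [mixProbD_indicator_const, mixProbD_indicator_const, hnil, inv_mul_cancel₀ hcard.ne',
    log_one, log_mul (inv_ne_zero hcard.ne') (hsum _).ne', log_inv]
  simp only [histProb_ofFn]
  ring

end

theorem stmt15_general {d : ℕ} (Θm : Finset (Fin d → ℝ)) (hne : Θm.Nonempty)
    (θs : Fin d → ℝ) (η : ℝ)
    (Q : (Fin d → ℝ) → ℝ) (hQ0 : ∀ θ, 0 ≤ Q θ)
    (hQ1 : ∑ θ ∈ Θm, Q θ = 1)
    (hmean : ∀ i, ∑ θ ∈ Θm, Q θ * θ i = θs i)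
    (huncorr : ∀ i j, i ≠ j → ∑ θ ∈ Θm, Q θ * ((θ i - θs i) * (θ j - θs j)) = 0)
    (hvar : ∀ i, ∑ θ ∈ Θm, Q θ * (θ i - θs i) ^ 2 ≤ η ^ 2)
    {T : ℕ} (S : Fin T → (Fin d → ℝ) × ℝ) (hS : ValidSeq S) :
    regret (bayesAlgD ((Θm : Set (Fin d → ℝ)).indicator
        fun _ => ((Θm.card : ℝ))⁻¹)) S θs ≤
      Real.log Θm.card + d * T * η ^ 2 / 8 := by
  have hjensen := neg_log_sum_exp_neg_le Θm Q (seqLoss · S) (fun θ _ => hQ0 θ) hQ1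
  have hexpected := sum_mul_seqLoss_le Θm Q θs η (fun θ _ => hQ0 θ) hQ1 hmean huncorr hvar hS
  rw [regret, algLoss_bayesAlgD_uniform Θm hne S]
  linarith

/-- uniform-prior grid mixture bound: if some distribution `Q` supported on
the finite grid `Θ_m` has mean `θ*`, uncorrelated coordinates and coordinate variances at
most `η²`, then the Bayesian mixture with uniform prior on `Θ_m` has
`Regret(A*,S_T,θ*) ≤ log|Θ_m| + dTη²/8`. -/
theorem stmt15 {d : ℕ} (Θm : Finset (Fin d → ℝ)) (hne : Θm.Nonempty)
    (θs : Fin d → ℝ) (η : ℝ) (hη : 0 ≤ η)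
    (Q : (Fin d → ℝ) → ℝ) (hQ0 : ∀ θ, 0 ≤ Q θ) (hQsupp : ∀ θ ∉ Θm, Q θ = 0)
    (hQ1 : ∑ θ ∈ Θm, Q θ = 1)
    (hmean : ∀ i, ∑ θ ∈ Θm, Q θ * θ i = θs i)
    (huncorr : ∀ i j, i ≠ j → ∑ θ ∈ Θm, Q θ * ((θ i - θs i) * (θ j - θs j)) = 0)
    (hvar : ∀ i, ∑ θ ∈ Θm, Q θ * (θ i - θs i) ^ 2 ≤ η ^ 2)
    {T : ℕ} (S : Fin T → (Fin d → ℝ) × ℝ) (hS : ValidSeq S) :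
    regret (bayesAlgD ((Θm : Set (Fin d → ℝ)).indicator
        fun _ => ((Θm.card : ℝ))⁻¹)) S θs ≤
      Real.log Θm.card + d * T * η ^ 2 / 8 :=
  stmt15_general Θm hne θs η Q hQ0 hQ1 hmean huncorr hvar S hS
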